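/- Let M_1 = (V, I_1), …, M_k = (V, I_k) be k matroids over a common finite ground set V, let (S_1, …, S_k) be a partition of S ⊆ V with S_i ∈ I_i for all i ∈ [k], and let s, v₁, v₂, …, v_{l−1}, t_j be a shortest (s, T)-path in the compressed exchange graph G(S_1, …, S_k). Then S' = S + v₁ is a partitionable set. -/

import Mathlib

/-- A matroid on a finite ground set `V`, given by its family of independent sets. -/
structure FinMatroid (V : Type*) [DecidableEq V] [Fintype V] where
  Indep : Finset V → Prop
  indep_empty : Indep ∅
  indep_subset : ∀ ⦃S T : Finset V⦄, Indep S → T ⊆ S → Indep T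
  indep_aug : ∀ ⦃S T : Finset V⦄, Indep S → Indep T → T.card < S.card →
    ∃ x ∈ S \ T, Indep (insert x T)

/-- `S` is partitionable w.r.t. the matroids `M i`: it can be partitioned into
sets `P i` with `P i` independent in `M i`. -/
def Partitionable {V ι : Type*} [DecidableEq V] [Fintype V] [DecidableEq ι] [Fintype ι]
    (M : ι → FinMatroid V) (S : Finset V) : Prop :=
  ∃ P : ι → Finset V, (∀ i, (M i).Indep (P i)) ∧
    (∀ i j, i ≠ j → Disjoint (P i) (P j)) ∧ Finset.univ.biUnion P = S

/-- `reachIn Adj n x y` : there is a directed walk with exactly `n` edges from `x` to `y`. -/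
def reachIn {α : Type*} (Adj : α → α → Prop) : ℕ → α → α → Prop
  | 0, x, y => x = y
  | n + 1, x, y => ∃ z, Adj x z ∧ reachIn Adj n z y

/-- Distance (number of edges of a shortest directed path) from `x` to `y`; `⊤` if none. -/
noncomputable def ddist {α : Type*} (Adj : α → α → Prop) (x y : α) : ℕ∞ :=
  sInf {n : ℕ∞ | ∃ m : ℕ, n = (m : ℕ∞) ∧ reachIn Adj m x y}

/-- Vertices of the compressed exchange graph: ground elements, a source `src`,
and one sink `snk i` for each index `i`. -/
inductive CVert (V ι : Type*) where
  | elt : V → CVert V ι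
  | src : CVert V ι
  | snk : ι → CVert V ι

/-- The compressed exchange graph `G(S₁, …, S_k)` relative to the partition `P`. -/
def compAdj {V ι : Type*} [DecidableEq V] [Fintype V] [DecidableEq ι] [Fintype ι]
    (M : ι → FinMatroid V) (P : ι → Finset V) : CVert V ι → CVert V ι → Prop
  | CVert.elt v, CVert.elt u =>
      ∃ i, u ∈ P i ∧ ¬ (M i).Indep (insert v (P i)) ∧
        (M i).Indep (insert v ((P i).erase u))
  | CVert.src, CVert.elt v => v ∉ Finset.univ.biUnion P
  | CVert.elt v, CVert.snk i => v ∉ P i ∧ (M i).Indep (insert v (P i))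
  | _, _ => False

/-!
Write the path as `v 0, …, v n` followed by the sink `t_j`. Move each `v a` with `a < n` into the
part containing `v (a + 1)`, and `v n` into `S_j`. In a fixed matroid `M i` this performs, on `S_i`
(enlarged by `v n` when `i = j`), the exchanges `v a ↔ v (a + 1)` of the path edges ending in `S_i`.
A shortest path has no shortcut edge `v a → v b` with `b > a + 1`, so these exchanges are
triangular: carried out from the last one backwards, the fundamental circuit of every remaining
`v a` avoids the element just removed, so each remaining exchange stays valid and every new part is
independent.
-/

namespace Matroid

variable {α : Type*} {M : Matroid α} {I J A : Set α} {x u : α}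

lemma Indep.insert_sdiff_singleton_indep_iff_of_subset (hJ : M.Indep J) (hIJ : I ⊆ J)
    (hI : M.Dep (insert x I)) (hu : u ∈ I) :
    M.Indep (insert x (J \ {u})) ↔ M.Indep (insert x (I \ {u})) := by
  have hIi := hJ.subset hIJ
  obtain ⟨hxcl, hxI⟩ := hIi.insert_dep_iff.1 hI
  have hxJ : x ∉ J := fun hx => hI.not_indep (hJ.subset (Set.insert_subset hx hIJ))
  have hxu : x ≠ u := fun h => hxI (h ▸ hu)
  have hfund : M.fundCircuit x I = M.fundCircuit x J :=
    (hIi.fundCircuit_isCircuit hxcl hxI).eq_fundCircuit_of_subset hJ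
      ((M.fundCircuit_subset_insert x I).trans (Set.insert_subset_insert hIJ))
  rw [Set.insert_sdiff_singleton_comm hxu, Set.insert_sdiff_singleton_comm hxu,
    ← hJ.mem_fundCircuit_iff (M.closure_subset_closure hIJ hxcl) hxJ,
    ← hIi.mem_fundCircuit_iff hxcl hxI, hfund]

theorem Indep.indep_sdiff_image_union_image {κ : Type*} [LinearOrder κ] {x y : κ → α}
    {s : Finset κ} (hA : M.Indep A) (hx : ∀ k ∈ s, x k ∉ A) (hy : ∀ k ∈ s, y k ∈ A)
    (hexch : ∀ k ∈ s, M.Indep (insert (x k) (A \ {y k})))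
    (htri : ∀ k ∈ s, ∀ l ∈ s, k < l → ¬ M.Indep (insert (x k) (A \ {y l}))) :
    M.Indep (A \ y '' s ∪ x '' s) := by
  classical
  induction s using Finset.induction_on_max generalizing A with
  | empty => simpa using hA
  | insert a s hlt ih =>
    simp only [Finset.mem_insert, forall_eq_or_imp] at hx hy hexch htri
    obtain ⟨hxa, hx⟩ := hx
    obtain ⟨-, hy⟩ := hy
    obtain ⟨hexa, hexch⟩ := hexch
    obtain ⟨-, htri⟩ := htri
    have hxE : ∀ k ∈ s, x k ∈ M.E := fun k hk =>
      (hexch k hk).subset_ground (Set.mem_insert _ _)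
    have hdep : ∀ k ∈ s, M.Dep (insert (x k) (A \ {y a})) := fun k hk =>
      (not_indep_iff (Set.insert_subset (hxE k hk) (Set.sdiff_subset.trans hA.subset_ground))).1
        ((htri k hk).1 (hlt k hk))
    have hyI : ∀ k ∈ s, y k ∈ A \ {y a} := fun k hk =>
      ⟨hy k hk, fun h => (hdep k hk).not_indep (h ▸ hexch k hk)⟩
    have hswap : ∀ k ∈ s, ∀ l ∈ s,
        M.Indep (insert (x k) (insert (x a) (A \ {y a}) \ {y l})) ↔
          M.Indep (insert (x k) (A \ {y l})) := fun k hk l hl => by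
      rw [hexa.insert_sdiff_singleton_indep_iff_of_subset (Set.subset_insert _ _) (hdep k hk)
        (hyI l hl), hA.insert_sdiff_singleton_indep_iff_of_subset Set.sdiff_subset (hdep k hk)
        (hyI l hl)]
    refine (ih hexa (fun k hk => ?_) (fun k hk => Set.mem_insert_of_mem _ (hyI k hk))
      (fun k hk => (hswap k hk k hk).2 (hexch k hk))
      (fun k hk l hl hkl => (hswap k hk l hl).not.2 ((htri k hk).2 l hl hkl))).subset ?_
    · rintro (h | h)
      · exact (hdep k hk).not_indep (h ▸ hexa)
      · exact hx k hk h.1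
    · rintro u (⟨huA, huy⟩ | ⟨k, hk, rfl⟩)
      · simp only [Finset.coe_insert, Set.image_insert_eq, Set.mem_insert_iff, not_or] at huy
        exact Or.inl ⟨Set.mem_insert_of_mem _ ⟨huA, huy.1⟩, huy.2⟩
      · simp only [Finset.coe_insert, Set.mem_insert_iff] at hk
        rcases hk with rfl | hk
        · exact Or.inl ⟨Set.mem_insert _ _, fun ⟨l, hl, hyl⟩ => hxa (hyl ▸ hy l hl)⟩
        · exact Or.inr ⟨k, hk, rfl⟩

end Matroid

namespace FinMatroid

variable {V : Type*} [DecidableEq V] [Fintype V] (M : FinMatroid V)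

def toMatroid : Matroid V :=
  (IndepMatroid.ofFinset Set.univ M.Indep M.indep_empty
    (fun _ _ hJ hIJ => M.indep_subset hJ hIJ)
    (fun _ _ hI hJ hlt => by simpa [and_assoc] using M.indep_aug hJ hI hlt)
    (fun _ _ => Set.subset_univ _)).matroid

@[simp] lemma toMatroid_indep_coe {I : Finset V} : M.toMatroid.Indep I ↔ M.Indep I := by
  simp [toMatroid]

variable {M} {I J A : Finset V} {x u : V}

lemma not_indep_iff_toMatroid_dep {X : Finset V} : ¬ M.Indep X ↔ M.toMatroid.Dep X := by
  rw [← toMatroid_indep_coe, Matroid.not_indep_iff (Set.subset_univ _)]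

lemma indep_insert_erase_iff_of_subset (hJ : M.Indep J) (hIJ : I ⊆ J)
    (hI : ¬ M.Indep (insert x I)) (hu : u ∈ I) :
    M.Indep (insert x (J.erase u)) ↔ M.Indep (insert x (I.erase u)) := by
  rw [not_indep_iff_toMatroid_dep, Finset.coe_insert] at hI
  have := ((toMatroid_indep_coe M).2 hJ).insert_sdiff_singleton_indep_iff_of_subset
    (Finset.coe_subset.2 hIJ) hI hu
  simpa only [← Finset.coe_erase, ← Finset.coe_insert, toMatroid_indep_coe] using this

theorem indep_sdiff_image_union_image {κ : Type*} [LinearOrder κ] {x y : κ → V}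
    {s : Finset κ} (hA : M.Indep A) (hx : ∀ k ∈ s, x k ∉ A) (hy : ∀ k ∈ s, y k ∈ A)
    (hexch : ∀ k ∈ s, M.Indep (insert (x k) (A.erase (y k))))
    (htri : ∀ k ∈ s, ∀ l ∈ s, k < l → ¬ M.Indep (insert (x k) (A.erase (y l)))) :
    M.Indep (A \ s.image y ∪ s.image x) := by
  rw [← toMatroid_indep_coe]
  push_cast
  refine ((toMatroid_indep_coe M).2 hA).indep_sdiff_image_union_image hx hy
    (fun k hk => ?_) (fun k hk l hl hkl => ?_)
  all_goals rw [← Finset.coe_erase, ← Finset.coe_insert, toMatroid_indep_coe]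
  exacts [hexch k hk, htri k hk l hl hkl]

end FinMatroid

lemma exists_index_of_pairwise_disjoint {V ι : Type*} [Nonempty ι] {P : ι → Finset V}
    (hdisj : ∀ i j, i ≠ j → Disjoint (P i) (P j)) :
    ∃ f : V → ι, ∀ u i, u ∈ P i → f u = i := by
  classical
  refine ⟨fun u => if h : ∃ i, u ∈ P i then h.choose else Classical.arbitrary ι,
    fun u i hu => ?_⟩
  have h : ∃ i, u ∈ P i := ⟨i, hu⟩
  simp only [dif_pos h]
  by_contra hne
  exact Finset.disjoint_left.1 (hdisj _ _ hne) h.choose_spec hu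

section Partition

variable {V ι : Type*} [DecidableEq V] [Fintype V] [DecidableEq ι] [Fintype ι]

lemma partitionable_of_indep_filter (M : ι → FinMatroid V) (T : Finset V) (σ : V → ι)
    (h : ∀ i, (M i).Indep (T.filter (σ · = i))) : Partitionable M T :=
  ⟨fun i => T.filter (σ · = i), h,
    fun _ _ hij => Finset.disjoint_left.2 fun _ h₁ h₂ =>
      hij ((Finset.mem_filter.1 h₁).2.symm.trans (Finset.mem_filter.1 h₂).2),
    by ext; simp⟩

end Partition

section Walks

variable {α : Type*} {Adj : α → α → Prop}

lemma reachIn_add : ∀ {m n : ℕ} {x y z : α}, reachIn Adj m x y → reachIn Adj n y z →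
    reachIn Adj (m + n) x z
  | 0, _, _, _, _, rfl, h => by rwa [Nat.zero_add]
  | m + 1, n, _, _, _, ⟨w, hxw, hwy⟩, h => by
    rw [Nat.add_right_comm]
    exact ⟨w, hxw, reachIn_add hwy h⟩

lemma ddist_le_of_reachIn {n : ℕ} {x y : α} (h : reachIn Adj n x y) : ddist Adj x y ≤ n :=
  sInf_le ⟨n, rfl, h⟩

lemma List.IsChain.reachIn_getElem {l : List α} (hl : l.IsChain Adj) :
    ∀ (n p : ℕ) (h : p + n < l.length), reachIn Adj n l[p] l[p + n]
  | 0, _, _ => rfl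
  | n + 1, p, h => ⟨l[p + 1], List.isChain_iff_getElem.1 hl p (by omega), by
      simpa only [Nat.add_right_comm, Nat.add_assoc] using hl.reachIn_getElem n (p + 1) (by omega)⟩

lemma List.IsChain.not_adj_of_le_ddist {l : List α} (hl : l.IsChain Adj) (hne : l ≠ [])
    (hshort : ((l.length - 1 : ℕ) : ℕ∞) ≤ ddist Adj (l.head hne) (l.getLast hne))
    {p q : ℕ} (hpq : p + 1 < q) (hq : q < l.length) : ¬ Adj l[p] l[q] := by
  intro hadj
  have hpre : reachIn Adj p (l.head hne) l[p] := by
    simpa [List.head_eq_getElem] using hl.reachIn_getElem p 0 (by omega)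
  have hsuf : reachIn Adj (l.length - 1 - q) l[q] (l.getLast hne) := by
    simpa [List.getLast_eq_getElem, show q + (l.length - 1 - q) = l.length - 1 by omega] using
      hl.reachIn_getElem (l.length - 1 - q) q (by omega)
  have hwalk := reachIn_add hpre (reachIn_add (m := 1) ⟨l[q], hadj, rfl⟩ hsuf)
  have := hshort.trans (ddist_le_of_reachIn hwalk)
  norm_cast at this
  omega

end Walks

section ExchangeIndices

variable {V ι : Type*} [DecidableEq V]

/-- The positions `a` whose edge `v a → v (a + 1)` is an exchange in the `i`-th matroid. -/
def exchangeIndices (P : ι → Finset V) (v : ℕ → V) (n : ℕ) (i : ι) : Finset ℕ :=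
  (Finset.range n).filter (fun a => v (a + 1) ∈ P i)

lemma mem_exchangeIndices {P : ι → Finset V} {v : ℕ → V} {n a : ℕ} {i : ι} :
    a ∈ exchangeIndices P v n i ↔ a < n ∧ v (a + 1) ∈ P i := by
  simp [exchangeIndices]

lemma subset_update_insert [DecidableEq ι] (P : ι → Finset V) (w : V) (i j : ι) :
    P i ⊆ Function.update P j (insert w (P j)) i := by
  by_cases hij : i = j
  · subst hij
    simp
  · simp [hij]

end ExchangeIndices

section AugmentingPath

variable {V ι : Type*} [DecidableEq V] [Fintype V] [DecidableEq ι] [Fintype ι]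
  {M : ι → FinMatroid V} {P : ι → Finset V}

lemma exchange_of_compAdj_of_mem (hdisj : ∀ i j, i ≠ j → Disjoint (P i) (P j)) {x y : V}
    {i : ι} (h : compAdj M P (.elt x) (.elt y)) (hy : y ∈ P i) :
    ¬ (M i).Indep (insert x (P i)) ∧ (M i).Indep (insert x ((P i).erase y)) := by
  obtain ⟨i', hi', h⟩ := h
  obtain rfl : i' = i := by_contra fun hne => Finset.disjoint_left.1 (hdisj _ _ hne) hi' hy
  exact h

lemma indep_update_insert_of_compAdj_snk (hind : ∀ i, (M i).Indep (P i)) {w : V} {j : ι}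
    (h : compAdj M P (.elt w) (.snk j)) (i : ι) :
    (M i).Indep (Function.update P j (insert w (P j)) i) := by
  by_cases hij : i = j
  · subst hij
    simpa using h.2
  · simpa [hij] using hind i

lemma indep_insert_erase_update_iff (hind : ∀ i, (M i).Indep (P i)) {w x u : V} {i j : ι}
    (hw : compAdj M P (.elt w) (.snk j)) (hx : ¬ (M i).Indep (insert x (P i))) (hu : u ∈ P i) :
    (M i).Indep (insert x ((Function.update P j (insert w (P j)) i).erase u)) ↔
      (M i).Indep (insert x ((P i).erase u)) := by
  by_cases hij : i = j
  · subst hij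
    simpa using FinMatroid.indep_insert_erase_iff_of_subset
      (indep_update_insert_of_compAdj_snk hind hw i) (subset_update_insert _ _ _ _) hx hu
  · simp [hij]

structure IsShortcutFreePath (M : ι → FinMatroid V) (P : ι → Finset V) (v : ℕ → V) (n : ℕ)
    (j : ι) : Prop where
  injOn : Set.InjOn v (Set.Iic n)
  adj : ∀ a < n, compAdj M P (.elt (v a)) (.elt (v (a + 1)))
  adj_snk : compAdj M P (.elt (v n)) (.snk j)
  not_adj : ∀ a b, a + 1 < b → b ≤ n → ¬ compAdj M P (.elt (v a)) (.elt (v b))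

theorem IsShortcutFreePath.indep_update_sdiff_union (hind : ∀ i, (M i).Indep (P i))
    (hdisj : ∀ i j, i ≠ j → Disjoint (P i) (P j)) {v : ℕ → V} {n : ℕ} {j : ι}
    (hpath : IsShortcutFreePath M P v n j) (i : ι) :
    (M i).Indep (Function.update P j (insert (v n) (P j)) i \
      (exchangeIndices P v n i).image (fun a => v (a + 1)) ∪
        (exchangeIndices P v n i).image v) := by
  have hexch : ∀ a ∈ exchangeIndices P v n i, ¬ (M i).Indep (insert (v a) (P i)) ∧
      (M i).Indep (insert (v a) ((P i).erase (v (a + 1)))) := fun a ha =>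
    exchange_of_compAdj_of_mem hdisj (hpath.adj a (mem_exchangeIndices.1 ha).1)
      (mem_exchangeIndices.1 ha).2
  have htransfer : ∀ a ∈ exchangeIndices P v n i, ∀ u ∈ P i,
      (M i).Indep (insert (v a) ((Function.update P j (insert (v n) (P j)) i).erase u)) ↔
        (M i).Indep (insert (v a) ((P i).erase u)) := fun a ha _ hu =>
    indep_insert_erase_update_iff hind hpath.adj_snk (hexch a ha).1 hu
  refine FinMatroid.indep_sdiff_image_union_image
    (indep_update_insert_of_compAdj_snk hind hpath.adj_snk i) (fun a ha hvA => ?_)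
    (fun a ha => ?_)
    (fun a ha => (htransfer a ha _ (mem_exchangeIndices.1 ha).2).2 (hexch a ha).2)
    (fun a ha b hb hab => (htransfer a ha _ (mem_exchangeIndices.1 hb).2).not.2 fun h =>
      hpath.not_adj a (b + 1) (by omega) (mem_exchangeIndices.1 hb).1
        ⟨i, (mem_exchangeIndices.1 hb).2, (hexch a ha).1, h⟩)
  · have hvP : v a ∉ P i := fun h =>
      (hexch a ha).1 (by rw [Finset.insert_eq_of_mem h]; exact hind i)
    have hvn : v a ≠ v n := fun h => by
      have := hpath.injOn (mem_exchangeIndices.1 ha).1.le (Set.self_mem_Iic) h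
      have := (mem_exchangeIndices.1 ha).1
      omega
    by_cases hij : i = j
    · subst hij
      simp [hvP, hvn] at hvA
    · simp [hij, hvP] at hvA
  · exact subset_update_insert _ _ _ _ (mem_exchangeIndices.1 ha).2

theorem IsShortcutFreePath.partitionable_insert (hind : ∀ i, (M i).Indep (P i))
    (hdisj : ∀ i j, i ≠ j → Disjoint (P i) (P j)) {v : ℕ → V} {n : ℕ} {j : ι}
    (hpath : IsShortcutFreePath M P v n j) :
    Partitionable M (insert (v 0) (Finset.univ.biUnion P)) := by
  have : Nonempty ι := ⟨j⟩
  obtain ⟨owner, howner⟩ := exists_index_of_pairwise_disjoint hdisj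
  -- `v a` moves to the part of `v (a + 1)`, `v n` to `P j`; every other element stays put.
  set σ : V → ι := Function.extend ((Set.Iic n).domRestrict v)
    (fun a => if a.1 < n then owner (v (a.1 + 1)) else j) owner
  have hσ : ∀ a ≤ n, σ (v a) = if a < n then owner (v (a + 1)) else j := fun a ha =>
    hpath.injOn.injective.extend_apply _ _ ⟨a, ha⟩
  have hσ' : ∀ u, (∀ a ≤ n, v a ≠ u) → σ u = owner u := fun u hu =>
    Function.extend_apply' _ _ _ fun ⟨⟨a, ha⟩, h⟩ => hu a ha h
  refine partitionable_of_indep_filter M _ σ fun i =>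
    (M i).indep_subset (hpath.indep_update_sdiff_union hind hdisj i) fun u hu => ?_
  simp only [Finset.mem_filter, Finset.mem_insert, Finset.mem_biUnion, Finset.mem_univ,
    true_and] at hu
  obtain ⟨hu, rfl⟩ := hu
  by_cases hon : ∃ a ≤ n, v a = u
  · obtain ⟨a, ha, rfl⟩ := hon
    rw [hσ a ha]
    split_ifs with han
    · obtain ⟨i', hi', -⟩ := hpath.adj a han
      refine Finset.mem_union_right _ (Finset.mem_image_of_mem _ ?_)
      exact mem_exchangeIndices.2 ⟨han, by rwa [howner _ _ hi']⟩
    · obtain rfl : a = n := by omega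
      refine Finset.mem_union_left _ (Finset.mem_sdiff.2 ⟨by simp, fun h => ?_⟩)
      obtain ⟨b, hb, hvb⟩ := Finset.mem_image.1 h
      obtain ⟨hbn, hbP⟩ := mem_exchangeIndices.1 hb
      obtain rfl : b + 1 = a := hpath.injOn hbn Set.self_mem_Iic hvb
      exact hpath.adj_snk.1 hbP
  · push Not at hon
    obtain ⟨i, hi⟩ := hu.resolve_left (hon 0 (Nat.zero_le _)).symm
    rw [hσ' u hon, howner u i hi]
    refine Finset.mem_union_left _
      (Finset.mem_sdiff.2 ⟨subset_update_insert _ _ _ _ hi, fun h => ?_⟩)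
    obtain ⟨b, hb, hvb⟩ := Finset.mem_image.1 h
    exact hon (b + 1) (mem_exchangeIndices.1 hb).1 hvb

end AugmentingPath

section ShortestPath

variable {V ι : Type*} [DecidableEq V] [Fintype V] [DecidableEq ι] [Fintype ι]
  {M : ι → FinMatroid V} {P : ι → Finset V}

theorem isShortcutFreePath_of_le_ddist {vs : List V} (d : V) (hne : vs ≠ []) (hnd : vs.Nodup)
    {j : ι} (hchain : (CVert.src :: (vs.map CVert.elt ++ [CVert.snk j])).IsChain (compAdj M P))
    (hshort : ((vs.length + 1 : ℕ) : ℕ∞) ≤ ddist (compAdj M P) .src (.snk j)) :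
    IsShortcutFreePath M P (fun a => vs.getD a d) (vs.length - 1) j := by
  set L : List (CVert V ι) := CVert.src :: (vs.map CVert.elt ++ [CVert.snk j])
  have hlen : L.length = vs.length + 2 := by simp [L]
  have hpos : 0 < vs.length := List.length_pos_iff.2 hne
  have hLv : ∀ a (ha : a < vs.length), L[a + 1]'(by omega) = .elt (vs.getD a d) := by
    intro a ha
    simp [L, List.getElem_append_left, ha]
  have hLlast : L[vs.length + 1]'(by omega) = .snk j := by simp [L]
  have hadj : ∀ a (ha : a + 1 < L.length), compAdj M P L[a] L[a + 1] :=
    List.isChain_iff_getElem.1 hchain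
  refine ⟨fun a ha b hb h => ?_, fun a ha => ?_, ?_, fun a b hab hb => ?_⟩
  · rw [Set.mem_Iic] at ha hb
    simp only [List.getD_eq_getElem _ _ (by omega : a < vs.length),
      List.getD_eq_getElem _ _ (by omega : b < vs.length)] at h
    exact hnd.getElem_inj_iff.1 h
  · simpa only [hLv a (by omega), hLv (a + 1) (by omega)] using hadj (a + 1) (by omega)
  · have h := hadj (vs.length - 1 + 1) (by omega)
    rw [hLv _ (by omega)] at h
    simpa only [Nat.sub_add_cancel hpos, hLlast] using h
  · simpa only [hLv a (by omega), hLv b (by omega)] using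
      hchain.not_adj_of_le_ddist (by simp [L]) (by simpa [L] using hshort)
        (p := a + 1) (q := b + 1) (by omega) (by omega)

end ShortestPath

/-- If `s, v₁, …, v_{l−1}, t_j` is a shortest `(s,T)`-path in the compressed exchange
graph, then `S + v₁` is partitionable. -/
theorem shortest_augmenting_path_partition {V ι : Type*} [DecidableEq V] [Fintype V]
    [DecidableEq ι] [Fintype ι] (M : ι → FinMatroid V) (P : ι → Finset V) (S : Finset V)
    (hind : ∀ i, (M i).Indep (P i)) (hdisj : ∀ i j, i ≠ j → Disjoint (P i) (P j))
    (hS : Finset.univ.biUnion P = S)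
    (j : ι) (vs : List V) (hne : vs ≠ []) (hnd : vs.Nodup)
    (hchain : List.Chain' (compAdj M P)
      (CVert.src :: (vs.map CVert.elt ++ [CVert.snk j])))
    (hshort : (⨅ i : ι, ddist (compAdj M P) CVert.src (CVert.snk i))
      = ((vs.length + 1 : ℕ) : ℕ∞)) :
    Partitionable M (insert (vs.head hne) S) := by
  have hpath := isShortcutFreePath_of_le_ddist (vs.head hne) hne hnd hchain
    (hshort ▸ iInf_le _ j)
  simpa [← hS, List.head_eq_getElem, List.getElem?_eq_getElem (List.length_pos_iff.2 hne)]
    using hpath.partitionable_insert hind hdisj
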